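/- Let q be a prime power and n ≥ 1. Regard F_{q^n} as an n-dimensional vector space over F_q, let z be a generator of (F_{q^n})^×, and let C be the cyclic subgroup of the group of F_q-linear automorphisms of F_{q^n} generated by multiplication by z. Then the normalizer N(C) of C in the group of F_q-linear automorphisms of F_{q^n} is generated by C together with the Frobenius map α ↦ α^q, and has order n(q^n − 1). -/

import Mathlib

/-!
An element `g` of the normalizer conjugates each multiplication `x ↦ a x` into another one,
`x ↦ w x`, so `g (a x) = w g(x)`; taking `x = 1` gives `g (a b) g(1) = g(a) g(b)`. Hence
`g(1)⁻¹ g` is a field automorphism of `E` over `F_q`, i.e. a power of the Frobenius, and every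
element of `N(C)` is uniquely `u σ` with `u ∈ Eˣ` and `σ ∈ Gal(E/F_q)`, so
`|N(C)| = (qⁿ - 1) n`.
-/

open Subgroup

section

variable (K E : Type*) [CommRing K] [Field E] [Algebra K E]

def lmulUnits : Eˣ →* (Module.End K E)ˣ :=
  Units.map (Algebra.lmul K E).toRingHom.toMonoidHom

def algEquivToEndUnits : (E ≃ₐ[K] E) →* (Module.End K E)ˣ :=
  (AlgEquiv.toLinearMapHom K E).toHomUnits

variable {K E}

@[simp]
lemma lmulUnits_apply (u : Eˣ) (x : E) : (lmulUnits K E u : Module.End K E) x = u * x := rfl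

@[simp]
lemma lmulUnits_inv_apply (u : Eˣ) (x : E) :
    (↑(lmulUnits K E u)⁻¹ : Module.End K E) x = ↑u⁻¹ * x := rfl

@[simp]
lemma algEquivToEndUnits_apply (σ : E ≃ₐ[K] E) (x : E) :
    (algEquivToEndUnits K E σ : Module.End K E) x = σ x := rfl

lemma algEquivToEndUnits_mul_lmulUnits (σ : E ≃ₐ[K] E) (u : Eˣ) :
    algEquivToEndUnits K E σ * lmulUnits K E u =
      lmulUnits K E (Units.map (σ : E →* E) u) * algEquivToEndUnits K E σ := by
  ext x
  simp

lemma range_algEquivToEndUnits_le_normalizer :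
    (algEquivToEndUnits K E).range ≤ normalizer (lmulUnits K E).range := by
  rw [le_set_normalizer_iff]
  rintro _ ⟨σ, rfl⟩ _ ⟨u, rfl⟩
  exact ⟨Units.map (σ : E →* E) u, by
    rw [algEquivToEndUnits_mul_lmulUnits, mul_inv_cancel_right]⟩

lemma lmulUnits_mul_algEquivToEndUnits_mem_normalizer (u : Eˣ) (σ : E ≃ₐ[K] E) :
    lmulUnits K E u * algEquivToEndUnits K E σ ∈ normalizer (lmulUnits K E).range :=
  mul_mem (le_normalizer ⟨u, rfl⟩) (range_algEquivToEndUnits_le_normalizer ⟨σ, rfl⟩)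

lemma exists_apply_mul_eq_mul_apply_of_mem_normalizer {g : (Module.End K E)ˣ}
    (hg : g ∈ normalizer (lmulUnits K E).range) (a : Eˣ) :
    ∃ w : E, ∀ x, (g : Module.End K E) (a * x) = w * (g : Module.End K E) x := by
  obtain ⟨w, hw⟩ := (hg (lmulUnits K E a)).mp ⟨a, rfl⟩
  refine ⟨w, fun x => ?_⟩
  have hcomm : g * lmulUnits K E a = lmulUnits K E w * g := mul_inv_eq_iff_eq_mul.mp hw.symm
  simpa using LinearMap.congr_fun (congrArg Units.val hcomm) x

lemma apply_mul_mul_apply_one_of_mem_normalizer {g : (Module.End K E)ˣ}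
    (hg : g ∈ normalizer (lmulUnits K E).range) (a b : E) :
    (g : Module.End K E) (a * b) * (g : Module.End K E) 1 =
      (g : Module.End K E) a * (g : Module.End K E) b := by
  rcases eq_or_ne a 0 with rfl | ha
  · simp
  obtain ⟨w, hw⟩ := exists_apply_mul_eq_mul_apply_of_mem_normalizer hg (Units.mk0 a ha)
  have hga : (g : Module.End K E) a = w * (g : Module.End K E) 1 := by simpa using hw 1
  rw [Units.val_mk0] at hw
  rw [hw, hga]
  ring

lemma exists_eq_lmulUnits_mul_algEquivToEndUnits_of_mem_normalizer {g : (Module.End K E)ˣ}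
    (hg : g ∈ normalizer (lmulUnits K E).range) :
    ∃ (u : Eˣ) (σ : E ≃ₐ[K] E), lmulUnits K E u * algEquivToEndUnits K E σ = g := by
  have hg1 : (g : Module.End K E) 1 ≠ 0 :=
    (map_ne_zero_iff _ ((Module.End.isUnit_iff _).mp g.isUnit).injective).mpr one_ne_zero
  set u := Units.mk0 _ hg1
  set f := lmulUnits K E u⁻¹ * g
  have hf1 : (f : Module.End K E) 1 = 1 := by simp [f, u, hg1]
  have hf_mul (a b : E) :
      (f : Module.End K E) (a * b) = (f : Module.End K E) a * (f : Module.End K E) b := by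
    simp only [f, u, map_inv, Units.val_mul, Module.End.mul_apply, lmulUnits_inv_apply,
      Units.val_inv_eq_inv_val, Units.val_mk0]
    rw [mul_mul_mul_comm, ← apply_mul_mul_apply_one_of_mem_normalizer hg a b]
    field_simp
  refine ⟨u, .ofBijective (AlgHom.ofLinearMap f hf1 hf_mul)
    ((Module.End.isUnit_iff _).mp f.isUnit), ?_⟩
  ext x
  simp [f]

lemma mem_normalizer_range_lmulUnits_iff {g : (Module.End K E)ˣ} :
    g ∈ normalizer (lmulUnits K E).range ↔
      ∃ (u : Eˣ) (σ : E ≃ₐ[K] E), lmulUnits K E u * algEquivToEndUnits K E σ = g := by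
  refine ⟨exists_eq_lmulUnits_mul_algEquivToEndUnits_of_mem_normalizer, ?_⟩
  rintro ⟨u, σ, rfl⟩
  exact lmulUnits_mul_algEquivToEndUnits_mem_normalizer u σ

lemma injective_lmulUnits_mul_algEquivToEndUnits :
    Function.Injective fun p : Eˣ × (E ≃ₐ[K] E) =>
      lmulUnits K E p.1 * algEquivToEndUnits K E p.2 := by
  rintro ⟨u, σ⟩ ⟨v, τ⟩ h
  have huv : u = v := Units.ext (by simpa using LinearMap.congr_fun (congrArg Units.val h) 1)
  subst huv
  have hστ := mul_left_cancel h
  exact Prod.ext rfl <| AlgEquiv.ext fun x => by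
    simpa using LinearMap.congr_fun (congrArg Units.val hστ) x

lemma card_normalizer_range_lmulUnits :
    Nat.card (normalizer ((lmulUnits K E).range : Set (Module.End K E)ˣ)) =
      Nat.card Eˣ * Nat.card (E ≃ₐ[K] E) := by
  rw [← Nat.card_prod, ← Nat.card_range_of_injective injective_lmulUnits_mul_algEquivToEndUnits]
  exact Nat.card_congr (Equiv.subtypeEquivRight fun g => by
    rw [mem_normalizer_range_lmulUnits_iff]; simp [Set.mem_range])

lemma normalizer_range_lmulUnits_eq_closure {σ₀ : E ≃ₐ[K] E}
    (hσ₀ : ∀ σ, σ ∈ zpowers σ₀) :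
    normalizer (lmulUnits K E).range =
      closure ((lmulUnits K E).range ∪ {algEquivToEndUnits K E σ₀}) := by
  refine le_antisymm ?_ ?_
  · rintro _ hg
    obtain ⟨u, σ, rfl⟩ := mem_normalizer_range_lmulUnits_iff.mp hg
    obtain ⟨k, rfl⟩ := mem_zpowers_iff.mp (hσ₀ σ)
    rw [map_zpow]
    exact mul_mem (subset_closure (.inl ⟨u, rfl⟩)) (zpow_mem (subset_closure (.inr rfl)) k)
  · rw [closure_le]
    rintro _ (hg | rfl)
    · exact le_normalizer hg
    · exact range_algEquivToEndUnits_le_normalizer ⟨σ₀, rfl⟩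

end

theorem normalizer_of_singer_eq_closure_frobenius_general
    (q n : ℕ)
    (Fq : Type) [Field Fq] [Fintype Fq] (hq : Fintype.card Fq = q)
    (E : Type) [Field E] [Fintype E] [Algebra Fq E] (hE : Fintype.card E = q ^ n)
    (z : Eˣ) (hz : ∀ u : Eˣ, u ∈ Subgroup.zpowers z)
    (φ : (Module.End Fq E)ˣ) (hφ : ∀ x : E, (φ : Module.End Fq E) x = x ^ q) :
    Subgroup.normalizer ((Subgroup.zpowers
        (Units.map (Algebra.lmul Fq E).toRingHom.toMonoidHom z) : Set ((Module.End Fq E)ˣ))) =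
      Subgroup.closure
        ((Subgroup.zpowers
            (Units.map (Algebra.lmul Fq E).toRingHom.toMonoidHom z) : Set ((Module.End Fq E)ˣ))
          ∪ {φ}) ∧
    Nat.card (Subgroup.normalizer ((Subgroup.zpowers
        (Units.map (Algebra.lmul Fq E).toRingHom.toMonoidHom z) : Set ((Module.End Fq E)ˣ)))) =
      n * (q ^ n - 1) := by
  have hC : zpowers (lmulUnits Fq E z) = (lmulUnits Fq E).range := by
    rw [← MonoidHom.map_zpowers, (eq_top_iff' _).mpr hz, MonoidHom.range_eq_map]
  have hφ_frob : φ = algEquivToEndUnits Fq E (FiniteField.frobeniusAlgEquivOfAlgebraic Fq E) :=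
    Units.ext <| LinearMap.ext fun x => by simp [hφ, hq]
  have hrank : Module.finrank Fq E = n := by
    have h := Module.card_eq_pow_finrank (K := Fq) (V := E)
    rw [hq, hE] at h
    exact Nat.pow_right_injective (hq ▸ Fintype.one_lt_card) h.symm
  change normalizer (zpowers (lmulUnits Fq E z) : Set (Module.End Fq E)ˣ) =
      closure ((zpowers (lmulUnits Fq E z) : Set (Module.End Fq E)ˣ) ∪ {φ}) ∧
    Nat.card (normalizer (zpowers (lmulUnits Fq E z) : Set (Module.End Fq E)ˣ)) = n * (q ^ n - 1)
  rw [hC, hφ_frob]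
  refine ⟨normalizer_range_lmulUnits_eq_closure fun σ => ?_, ?_⟩
  · obtain ⟨k, rfl⟩ := (FiniteField.bijective_frobeniusAlgEquivOfAlgebraic_pow Fq E).2 σ
    exact npow_mem_zpowers _ _
  · rw [card_normalizer_range_lmulUnits, IsGalois.card_aut_eq_finrank, hrank,
      Nat.card_units, Nat.card_eq_fintype_card, hE, mul_comm]

/-- Regard `F_{qⁿ}` (a field `E` with `qⁿ` elements) as an `n`-dimensional
vector space over `F_q`, let `z` be a generator of `Eˣ` and `C` the cyclic subgroup of the
group of `F_q`-linear automorphisms of `E` generated by multiplication by `z`. Then the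
normalizer `N(C)` is generated by `C` together with the Frobenius map `α ↦ α^q`, and
`N(C)` has order `n·(qⁿ − 1)`. -/
theorem normalizer_of_singer_eq_closure_frobenius
    (q n : ℕ) (hn : 1 ≤ n)
    (Fq : Type) [Field Fq] [Fintype Fq] (hq : Fintype.card Fq = q)
    (E : Type) [Field E] [Fintype E] [Algebra Fq E] (hE : Fintype.card E = q ^ n)
    (z : Eˣ) (hz : ∀ u : Eˣ, u ∈ Subgroup.zpowers z)
    (φ : (Module.End Fq E)ˣ) (hφ : ∀ x : E, (φ : Module.End Fq E) x = x ^ q) :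
    Subgroup.normalizer ((Subgroup.zpowers
        (Units.map (Algebra.lmul Fq E).toRingHom.toMonoidHom z) : Set ((Module.End Fq E)ˣ))) =
      Subgroup.closure
        ((Subgroup.zpowers
            (Units.map (Algebra.lmul Fq E).toRingHom.toMonoidHom z) : Set ((Module.End Fq E)ˣ))
          ∪ {φ}) ∧
    Nat.card (Subgroup.normalizer ((Subgroup.zpowers
        (Units.map (Algebra.lmul Fq E).toRingHom.toMonoidHom z) : Set ((Module.End Fq E)ˣ)))) =
      n * (q ^ n - 1) :=
  normalizer_of_singer_eq_closure_frobenius_general q n Fq hq E hE z hz φ hφ
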